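/- arXiv:0707.3303 — 3 statements merged into one kernel-verified Lean document; each statement's English description precedes it below -/
import Mathlib

section
/- For vectors ξ, η in a Hilbert C*-module H, the operator norm of the rank-one operator θ_{ξ,η} equals ‖ξ⟨η,η⟩^{1/2}‖, which also equals ‖⟨ξ,ξ⟩^{1/2}⟨η,η⟩^{1/2}‖. -/
open scoped RightActions

/-- The December 2024 Mathlib `CStarModule` (right `A`-module via `SMul Aᵐᵒᵖ E`), restated
because Mathlib's `CStarModule` is now a left module. -/
class RightCStarModule (A E : Type*) [NonUnitalSemiring A] [StarRing A] [Module ℂ A]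
    [AddCommGroup E] [Module ℂ E] [PartialOrder A] [SMul Aᵐᵒᵖ E] [Norm A] [Norm E]
    extends Inner A E where
  inner_add_right {x} {y} {z} : inner x (y + z) = inner x y + inner x z
  inner_self_nonneg {x} : 0 ≤ inner x x
  inner_self {x} : inner x x = 0 ↔ x = 0
  inner_op_smul_right {a : A} {x y : E} : inner x (y <• a) = inner x y * a
  inner_smul_right_complex {z : ℂ} {x} {y} : inner x (z • y) = z • inner x y
  star_inner x y : star (inner x y) = inner y x
  norm_eq_sqrt_norm_inner_self x : ‖x‖ = √‖inner x x‖

variable {A E : Type*} [NonUnitalCStarAlgebra A] [PartialOrder A] [StarOrderedRing A]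
  [AddCommGroup E] [Module ℂ E] [SMul Aᵐᵒᵖ E] [Norm E] [RightCStarModule A E]

/-- The rank-one operator `θ_{ξ,η} : ζ ↦ ξ⟨η,ζ⟩` on a Hilbert C*-module. -/
def rankOne (ξ η : E) : E → E := fun ζ => ξ <• (inner (𝕜 := A) η ζ)

/-- The operator norm of `θ_{ξ,η}`: the supremum of `‖θ_{ξ,η} ζ‖` over `‖ζ‖ ≤ 1`. -/
noncomputable def rankOneNorm (ξ η : E) : ℝ :=
  sSup {r : ℝ | ∃ ζ : E, ‖ζ‖ ≤ 1 ∧ r = ‖rankOne (A := A) ξ η ζ‖}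

/-!
Write `|ξ| = ⟨ξ,ξ⟩^{1/2}`. Since `⟨ξa, ξa⟩ = (|ξ|a)^*(|ξ|a)`, one has `‖ξa‖ = ‖|ξ|a‖` for all
`a ∈ A`, so `‖θ_{ξ,η}‖` is the supremum of `‖|ξ|⟨η,ζ⟩‖` over `‖ζ‖ ≤ 1`. The Cauchy–Schwarz
inequality `⟨η,ζ⟩⟨ζ,η⟩ ≤ ‖ζ‖²⟨η,η⟩` bounds it by `‖|ξ||η|‖`. The bound is approached by
`ζ = η g(⟨η,η⟩)` with `g(t) = √t / (t + ε²)`: then `‖ζ‖ ≤ 1` because `t g(t)² ≤ 1`, and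
`‖|η| - ⟨η,ζ⟩‖ ≤ ε` because `√t - t g(t) = ε²√t / (t + ε²) ≤ ε`.
-/

open scoped NNReal

lemma CStarAlgebra.norm_mul_le_norm_mul_of_mul_star_le {a b c : A}
    (h : b * star b ≤ c * star c) : ‖a * b‖ ≤ ‖a * c‖ := by
  have key : (a * b) * star (a * b) ≤ (a * c) * star (a * c) := by
    simpa only [star_mul, mul_assoc] using star_right_conjugate_le_conjugate h a
  have hsq : ‖a * b‖ ^ 2 ≤ ‖a * c‖ ^ 2 := by
    simpa only [sq, CStarRing.norm_self_mul_star] using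
      CStarAlgebra.norm_le_norm_of_nonneg_of_le (mul_star_self_nonneg _) key
  exact (pow_le_pow_iff_left₀ (norm_nonneg _) (norm_nonneg _) two_ne_zero).mp hsq

lemma CStarAlgebra.exists_norm_star_mul_mul_le_one_and_norm_sqrt_sub_mul_le {a : A} (ha : 0 ≤ a)
    {ε : ℝ≥0} (hε : 0 < ε) : ∃ c : A, ‖star c * a * c‖ ≤ 1 ∧ ‖CFC.sqrt a - a * c‖ ≤ ε := by
  obtain ⟨g, d, hg, hd, hg0, hd0, hg_bound, hsqrt_eq, hd_bound⟩ :
      ∃ g d : ℝ≥0 → ℝ≥0, Continuous g ∧ Continuous d ∧ g 0 = 0 ∧ d 0 = 0 ∧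
        (∀ t, g t * t * g t ≤ 1) ∧ (∀ t, NNReal.sqrt t = t * g t + d t) ∧ ∀ t, d t ≤ ε := by
    have hden : ∀ t : ℝ≥0, t + ε ^ 2 ≠ 0 := fun t => by positivity
    refine ⟨fun t => NNReal.sqrt t / (t + ε ^ 2), fun t => ε ^ 2 * NNReal.sqrt t / (t + ε ^ 2),
      by fun_prop (disch := exact hden _), by fun_prop (disch := exact hden _), by simp, by simp,
      fun t => ?_, fun t => by field_simp [hden t], fun t => ?_⟩
    · rw [div_mul_eq_mul_div, div_mul_div_comm, mul_right_comm, NNReal.mul_self_sqrt,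
        div_le_one (pos_of_ne_zero (mul_ne_zero (hden t) (hden t)))]
      exact mul_le_mul' le_self_add le_self_add
    · rw [div_le_iff₀ (pos_of_ne_zero (hden t)), ← NNReal.coe_le_coe]
      push_cast
      nlinarith [Real.sq_sqrt (NNReal.coe_nonneg t), Real.sqrt_nonneg t, NNReal.coe_nonneg ε,
        mul_nonneg (NNReal.coe_nonneg ε) (sq_nonneg (√(t : ℝ) - ε))]
  have hc : IsSelfAdjoint (cfcₙ g a) := .of_nonneg (cfcₙ_predicate g a)
  refine ⟨cfcₙ g a, ?_, ?_⟩
  · have : star (cfcₙ g a) * a * cfcₙ g a = cfcₙ (fun t => g t * t * g t) a := by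
      rw [hc.star_eq, cfcₙ_mul _ g a, cfcₙ_mul g _ a, cfcₙ_id' ℝ≥0 a]
    rw [this, ← coe_nnnorm, ← NNReal.coe_one, NNReal.coe_le_coe]
    exact nnnorm_cfcₙ_nnreal_le fun t _ => hg_bound t
  · have : CFC.sqrt a = a * cfcₙ g a + cfcₙ d a := by
      rw [CFC.sqrt, funext hsqrt_eq, cfcₙ_add _ d a, cfcₙ_mul _ g a, cfcₙ_id' ℝ≥0 a]
    rw [this, add_sub_cancel_left, ← coe_nnnorm, NNReal.coe_le_coe]
    exact nnnorm_cfcₙ_nnreal_le fun t _ => hd_bound t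

namespace RightCStarModule

local notation "⟪" x ", " y "⟫" => inner A x y

section

omit [StarOrderedRing A]

@[simp]
lemma inner_add_left {x y z : E} : ⟪x + y, z⟫ = ⟪x, z⟫ + ⟪y, z⟫ := by
  rw [← star_inner (A := A) z, inner_add_right, star_add, star_inner, star_inner]

@[simp]
lemma inner_op_smul_left {a : A} {x y : E} : ⟪x <• a, y⟫ = star a * ⟪x, y⟫ := by
  rw [← star_inner (A := A) y, inner_op_smul_right, star_mul, star_inner]

@[simp]
lemma inner_smul_right_real {r : ℝ} {x y : E} : ⟪x, r • y⟫ = r • ⟪x, y⟫ := by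
  rw [RCLike.real_smul_eq_coe_smul (K := ℂ) r y, inner_smul_right_complex]
  simp

@[simp]
lemma inner_smul_left_real {r : ℝ} {x y : E} : ⟪r • x, y⟫ = r • ⟪x, y⟫ := by
  rw [← star_inner (A := A) y, inner_smul_right_real, star_smul, star_trivial, star_inner]

@[simp]
lemma inner_sub_right {x y z : E} : ⟪x, y - z⟫ = ⟪x, y⟫ - ⟪x, z⟫ :=
  eq_sub_of_add_eq <| by rw [← inner_add_right, sub_add_cancel]

@[simp]
lemma inner_sub_left {x y z : E} : ⟪x - y, z⟫ = ⟪x, z⟫ - ⟪y, z⟫ := by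
  rw [← star_inner (A := A) z, inner_sub_right, star_sub, star_inner, star_inner]

@[simp]
lemma inner_zero_left {x : E} : ⟪0, x⟫ = 0 := by
  rw [← sub_self (0 : E), inner_sub_left, sub_self]

variable (A)
include A

lemma norm_sq_eq {x : E} : ‖x‖ ^ 2 = ‖⟪x, x⟫‖ := by
  rw [norm_eq_sqrt_norm_inner_self (A := A), Real.sq_sqrt (norm_nonneg _)]

protected lemma norm_nonneg {x : E} : 0 ≤ ‖x‖ := by
  rw [norm_eq_sqrt_norm_inner_self (A := A)]
  exact Real.sqrt_nonneg _

protected lemma norm_pos {x : E} (hx : x ≠ 0) : 0 < ‖x‖ := by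
  rw [norm_eq_sqrt_norm_inner_self (A := A), Real.sqrt_pos, norm_pos_iff]
  exact fun h => hx (inner_self.mp h)

protected lemma norm_zero : ‖(0 : E)‖ = 0 := by
  rw [norm_eq_sqrt_norm_inner_self (A := A), inner_zero_left, norm_zero, Real.sqrt_zero]

end

lemma inner_mul_inner_swap_le {x y : E} : ⟪y, x⟫ * ⟪x, y⟫ ≤ ‖x‖ ^ 2 • ⟪y, y⟫ := by
  rcases eq_or_ne x 0 with rfl | hx
  · simp [RightCStarModule.norm_zero A (E := E)]
  -- expand `0 ≤ ⟪x <• a - ‖x‖² • y, x <• a - ‖x‖² • y⟫`, then take `a = ⟪x, y⟫`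
  have key : ∀ a : A, (0 : A) ≤ ‖x‖ ^ 2 • (star a * a) - ‖x‖ ^ 2 • (star a * ⟪x, y⟫)
      - ‖x‖ ^ 2 • (⟪y, x⟫ * a) + ‖x‖ ^ 2 • (‖x‖ ^ 2 • ⟪y, y⟫) := fun a =>
    calc (0 : A) ≤ ⟪x <• a - ‖x‖ ^ 2 • y, x <• a - ‖x‖ ^ 2 • y⟫ := inner_self_nonneg
      _ = star a * ⟪x, x⟫ * a - ‖x‖ ^ 2 • (star a * ⟪x, y⟫)
          - ‖x‖ ^ 2 • (⟪y, x⟫ * a) + ‖x‖ ^ 2 • (‖x‖ ^ 2 • ⟪y, y⟫) := by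
        simp only [inner_sub_right, inner_op_smul_right, inner_sub_left, inner_op_smul_left,
          inner_smul_left_real, inner_smul_right_real, smul_sub, mul_assoc, smul_mul_assoc,
          sub_mul]
        abel
      _ ≤ _ := by
        gcongr
        rw [norm_sq_eq A]
        exact CStarAlgebra.star_left_conjugate_le_norm_smul (hb := star_inner (A := A) x x)
  specialize key ⟪x, y⟫
  simp only [star_inner, sub_self, zero_sub, le_neg_add_iff_add_le, add_zero] at key
  rwa [smul_le_smul_iff_of_pos_left (pow_pos (RightCStarModule.norm_pos A hx) _)] at key

lemma norm_op_smul_eq_norm_sqrt_mul (x : E) (a : A) : ‖x <• a‖ = ‖CFC.sqrt ⟪x, x⟫ * a‖ := by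
  have hs : IsSelfAdjoint (CFC.sqrt ⟪x, x⟫) := .of_nonneg (CFC.sqrt_nonneg _)
  have h : ⟪x <• a, x <• a⟫ = star (CFC.sqrt ⟪x, x⟫ * a) * (CFC.sqrt ⟪x, x⟫ * a) := by
    rw [inner_op_smul_left, inner_op_smul_right, star_mul, hs.star_eq, mul_assoc (star a),
      ← mul_assoc (CFC.sqrt _), CFC.sqrt_mul_sqrt_self _ inner_self_nonneg]
  rw [← sq_eq_sq₀ (RightCStarModule.norm_nonneg A) (norm_nonneg _), norm_sq_eq A, h,
    CStarRing.norm_star_mul_self, sq]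

lemma norm_mul_inner_le (a : A) (x y : E) : ‖a * ⟪x, y⟫‖ ≤ ‖y‖ * ‖a * CFC.sqrt ⟪x, x⟫‖ := by
  have hs : IsSelfAdjoint (CFC.sqrt ⟪x, x⟫) := .of_nonneg (CFC.sqrt_nonneg _)
  have hle : ⟪x, y⟫ * star ⟪x, y⟫ ≤ (‖y‖ • CFC.sqrt ⟪x, x⟫) * star (‖y‖ • CFC.sqrt ⟪x, x⟫) := by
    rw [star_inner, star_smul, star_trivial, hs.star_eq, smul_mul_smul_comm, ← sq,
      CFC.sqrt_mul_sqrt_self _ inner_self_nonneg]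
    exact inner_mul_inner_swap_le
  calc ‖a * ⟪x, y⟫‖ ≤ ‖a * (‖y‖ • CFC.sqrt ⟪x, x⟫)‖ :=
        CStarAlgebra.norm_mul_le_norm_mul_of_mul_star_le hle
    _ = ‖y‖ * ‖a * CFC.sqrt ⟪x, x⟫‖ := by
        rw [mul_smul_comm, norm_smul, Real.norm_of_nonneg (RightCStarModule.norm_nonneg A)]

lemma sqrt_inner_self_mem_closure_image_inner (x : E) :
    CFC.sqrt ⟪x, x⟫ ∈ closure ((⟪x, ·⟫) '' {y : E | ‖y‖ ≤ 1}) := by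
  refine Metric.mem_closure_iff.mpr fun ε hε => ?_
  obtain ⟨c, hc, hsub⟩ := CStarAlgebra.exists_norm_star_mul_mul_le_one_and_norm_sqrt_sub_mul_le
    (inner_self_nonneg (A := A) (x := x)) (Real.toNNReal_pos.mpr (half_pos hε))
  refine ⟨⟪x, x <• c⟫, ⟨x <• c, ?_, rfl⟩, ?_⟩
  · change ‖x <• c‖ ≤ 1
    rw [← pow_le_one_iff_of_nonneg (RightCStarModule.norm_nonneg A) two_ne_zero,
      norm_sq_eq A, inner_op_smul_left, inner_op_smul_right, ← mul_assoc]
    exact hc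
  · rw [dist_eq_norm, inner_op_smul_right]
    exact hsub.trans_lt ((Real.coe_toNNReal _ (half_pos hε).le).trans_lt (half_lt_self hε))

lemma isLUB_norm_mul_inner (a : A) (x : E) :
    IsLUB ((fun y => ‖a * ⟪x, y⟫‖) '' {y : E | ‖y‖ ≤ 1}) ‖a * CFC.sqrt ⟪x, x⟫‖ := by
  refine isLUB_of_mem_closure ?_ ?_
  · rintro _ ⟨y, hy, rfl⟩
    exact (norm_mul_inner_le a x y).trans (mul_le_of_le_one_left (norm_nonneg _) hy)
  · rw [← Set.image_image (fun b => ‖a * b‖)]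
    exact image_closure_subset_closure_image (by fun_prop)
      ⟨_, sqrt_inner_self_mem_closure_image_inner x, rfl⟩

end RightCStarModule

/-- `‖θ_{ξ,η}‖ = ‖ξ⟨η,η⟩^{1/2}‖ = ‖⟨ξ,ξ⟩^{1/2}⟨η,η⟩^{1/2}‖`. -/
theorem rankOneNorm_eq (ξ η : E) :
    rankOneNorm (A := A) ξ η = ‖ξ <• CFC.sqrt (inner (𝕜 := A) η η)‖
      ∧ rankOneNorm (A := A) ξ η
        = ‖CFC.sqrt (inner (𝕜 := A) ξ ξ) * CFC.sqrt (inner (𝕜 := A) η η)‖ := by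
  have hset : {r : ℝ | ∃ ζ : E, ‖ζ‖ ≤ 1 ∧ r = ‖rankOne (A := A) ξ η ζ‖} =
      (fun ζ => ‖CFC.sqrt (inner (𝕜 := A) ξ ξ) * inner (𝕜 := A) η ζ‖) '' {ζ : E | ‖ζ‖ ≤ 1} := by
    ext r
    simp [rankOne, RightCStarModule.norm_op_smul_eq_norm_sqrt_mul, eq_comm]
  have hnorm : rankOneNorm (A := A) ξ η =
      ‖CFC.sqrt (inner (𝕜 := A) ξ ξ) * CFC.sqrt (inner (𝕜 := A) η η)‖ := by
    rw [rankOneNorm, hset]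
    exact (RightCStarModule.isLUB_norm_mul_inner _ η).csSup_eq
      ⟨_, 0, by simp [RightCStarModule.norm_zero A], rfl⟩
  exact ⟨hnorm.trans (RightCStarModule.norm_op_smul_eq_norm_sqrt_mul ξ _).symm, hnorm⟩
end

section
/- Two operator-valued frames {A_j} and {B_j} (with range projections of all A_j, B_j under a common projection E₀) are right-similar, i.e., B_j = A_jT for an invertible T ∈ M(A⊗K), if and only if their frame projections coincide: P_A = P_B, where P_A = θ_A D_A^{−1}θ_A*. Moreover in that case T = D_A^{−1}θ_A*θ_B is uniquely determined. -/
/-!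
A right-similarity `B_j = A_j T` passes to the frame transforms, `θ_B = θ_A T`, because strict
limits are unique and right multiplication by a multiplier preserves strict sums. The frame
projection `θ (θ*θ)⁻¹ θ*` does not change when `θ` is multiplied on the right by an invertible,
so `P_A = P_B`. Conversely, `P_A = P_B` gives `θ_A (D_A⁻¹ θ_A* θ_B) = P_A θ_B = P_B θ_B = θ_B`,
and `D_A⁻¹ θ_A* θ_B` is invertible with inverse `D_B⁻¹ θ_B* θ_A`. Uniqueness holds because
`D_A⁻¹ θ_A*` is a left inverse of `θ_A`.
-/

open scoped MultiplierAlgebra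
open Filter Topology
open scoped Classical

variable {B : Type*} [NonUnitalCStarAlgebra B]

/-- The net of finite partial sums of the family `g` converges to `T` in the strict topology of
the multiplier algebra `𝓜(ℂ, B)`. -/
def HasStrictSum {J : Type*} (g : J → 𝓜(ℂ, B)) (T : 𝓜(ℂ, B)) : Prop :=
  ∀ b : B,
    Tendsto (fun F : Finset J => ((∑ j ∈ F, g j) - T) * (b : 𝓜(ℂ, B))) atTop (𝓝 0) ∧
    Tendsto (fun F : Finset J => (b : 𝓜(ℂ, B)) * ((∑ j ∈ F, g j) - T)) atTop (𝓝 0)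

namespace CStarRing

variable {A : Type*} [NonUnitalNormedRing A] [StarRing A] [CStarRing A]

lemma eq_zero_of_forall_mul_eq_zero_left {a : A} (h : ∀ x, x * a = 0) : a = 0 :=
  (star_mul_self_eq_zero_iff a).mp (h (star a))

lemma eq_zero_of_forall_mul_eq_zero_right {a : A} (h : ∀ x, a * x = 0) : a = 0 :=
  (mul_star_self_eq_zero_iff a).mp (h (star a))

end CStarRing

namespace DoubleCentralizer

lemma fst_apply_mul (a : 𝓜(ℂ, B)) (b d : B) : a.fst (b * d) = a.fst b * d := by
  refine sub_eq_zero.mp (CStarRing.eq_zero_of_forall_mul_eq_zero_left fun x => ?_)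
  rw [mul_sub, ← a.central, ← mul_assoc, a.central, mul_assoc, sub_self]

lemma mul_coe (a : 𝓜(ℂ, B)) (b : B) : a * (b : 𝓜(ℂ, B)) = ((a.fst b : B) : 𝓜(ℂ, B)) := by
  refine DoubleCentralizer.ext ℂ B _ _ (Prod.ext ?_ ?_) <;> ext d
  · simp [fst_apply_mul]
  · simp [a.central]

lemma eq_of_forall_coe_mul_eq {x y : 𝓜(ℂ, B)} (h : ∀ b : B, (b : 𝓜(ℂ, B)) * x = b * y) :
    x = y := by
  set z := x - y
  have hfst : ∀ d, z.fst d = 0 := fun d =>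
    CStarRing.eq_zero_of_forall_mul_eq_zero_left fun b => by
      simpa [z, mul_sub, sub_eq_zero] using congrArg (fun m : 𝓜(ℂ, B) => m.fst d) (h b)
  have hsnd : ∀ d, z.snd d = 0 := fun d =>
    CStarRing.eq_zero_of_forall_mul_eq_zero_right fun e => by rw [z.central, hfst, mul_zero]
  refine sub_eq_zero.mp (DoubleCentralizer.ext ℂ B _ _ (Prod.ext ?_ ?_)) <;> ext d
  · exact hfst d
  · exact hsnd d

end DoubleCentralizer

namespace HasStrictSum

variable {J : Type*} {g : J → 𝓜(ℂ, B)} {T T' : 𝓜(ℂ, B)}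

lemma unique (h : HasStrictSum g T) (h' : HasStrictSum g T') : T = T' :=
  DoubleCentralizer.eq_of_forall_coe_mul_eq fun b => by
    rw [← sub_eq_zero, ← mul_sub]
    refine tendsto_nhds_unique (tendsto_const_nhds (f := (atTop : Filter (Finset J)))) ?_
    simpa only [sub_zero, ← mul_sub, sub_sub_sub_cancel_left] using (h' b).2.sub (h b).2

lemma mul_right (h : HasStrictSum g T) (S : 𝓜(ℂ, B)) :
    HasStrictSum (fun j => g j * S) (T * S) := fun b => by
  have hsum (F : Finset J) : (∑ j ∈ F, g j * S) - T * S = ((∑ j ∈ F, g j) - T) * S := by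
    rw [sub_mul, Finset.sum_mul]
  simp only [hsum]
  constructor
  · simpa only [mul_assoc, DoubleCentralizer.mul_coe] using (h (S.fst b)).1
  · simpa only [mul_assoc, zero_mul] using (h b).2.mul_const S

end HasStrictSum

section FrameProjection

variable {R : Type*} [MonoidWithZero R] [StarMul R]

noncomputable def frameProjection (θ : R) : R := θ * Ring.inverse (star θ * θ) * star θ

lemma inverse_star_mul_self_mul_star_mul_self {θ : R} (hθ : IsUnit (star θ * θ)) :
    Ring.inverse (star θ * θ) * star θ * θ = 1 := by
  rw [mul_assoc, Ring.inverse_mul_cancel _ hθ]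

lemma frameProjection_mul_self {θ : R} (hθ : IsUnit (star θ * θ)) :
    frameProjection θ * θ = θ := by
  rw [frameProjection, mul_assoc, mul_assoc, ← mul_assoc _ (star θ),
    inverse_star_mul_self_mul_star_mul_self hθ, mul_one]

lemma frameProjection_mul_unit (θ : R) {T : R} (hT : IsUnit T) :
    frameProjection (θ * T) = frameProjection θ := by
  have hgram : star (θ * T) * (θ * T) = star T * (star θ * θ) * T := by
    simp only [star_mul, mul_assoc]
  rw [frameProjection, hgram, Ring.inverse_mul (Or.inr hT), Ring.inverse_mul (Or.inl hT.star),
    star_mul]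
  simp only [mul_assoc, Ring.mul_inverse_cancel_left _ _ hT,
    Ring.inverse_mul_cancel_left _ _ hT.star]
  rw [frameProjection, mul_assoc]

lemma mul_inverse_star_mul_self_mul_of_frameProjection_eq {θ η : R}
    (hη : IsUnit (star η * η)) (h : frameProjection θ = frameProjection η) :
    θ * (Ring.inverse (star θ * θ) * star θ * η) = η := by
  calc θ * (Ring.inverse (star θ * θ) * star θ * η) = frameProjection θ * η := by
        simp only [frameProjection, mul_assoc]
    _ = η := by rw [h, frameProjection_mul_self hη]

lemma isUnit_inverse_star_mul_self_mul_of_frameProjection_eq {θ η : R}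
    (hθ : IsUnit (star θ * θ)) (hη : IsUnit (star η * η))
    (h : frameProjection θ = frameProjection η) :
    IsUnit (Ring.inverse (star θ * θ) * star θ * η) := by
  refine ⟨⟨_, Ring.inverse (star η * η) * star η * θ, ?_, ?_⟩, rfl⟩
  · rw [mul_assoc, mul_inverse_star_mul_self_mul_of_frameProjection_eq hθ h.symm,
      inverse_star_mul_self_mul_star_mul_self hθ]
  · rw [mul_assoc, mul_inverse_star_mul_self_mul_of_frameProjection_eq hη h,
      inverse_star_mul_self_mul_star_mul_self hη]

end FrameProjection

theorem right_similar_iff_same_frame_projection_general {J : Type*}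
    (Af Bf L : J → 𝓜(ℂ, B))
    (θA θB DA DB : 𝓜(ℂ, B))
    (hθA : HasStrictSum (fun j => L j * Af j) θA)
    (hθB : HasStrictSum (fun j => L j * Bf j) θB)
    (hDA : star θA * θA = DA) (hDB : star θB * θB = DB)
    (hDAinv : IsUnit DA) (hDBinv : IsUnit DB)
    (hAf : ∀ j, Af j = star (L j) * θA) (hBf : ∀ j, Bf j = star (L j) * θB) :
    ((∃ T : 𝓜(ℂ, B), IsUnit T ∧ ∀ j, Bf j = Af j * T) ↔
      θA * Ring.inverse DA * star θA = θB * Ring.inverse DB * star θB)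
    ∧ ∀ T : 𝓜(ℂ, B), IsUnit T → (∀ j, Bf j = Af j * T) →
        T = Ring.inverse DA * star θA * θB := by
  subst hDA hDB
  have transform_eq (T : 𝓜(ℂ, B)) (hT : ∀ j, Bf j = Af j * T) : θB = θA * T :=
    hθB.unique <| by simpa only [hT, mul_assoc] using hθA.mul_right T
  refine ⟨⟨fun ⟨T, hT, hBT⟩ => ?_, fun hP => ?_⟩, fun T _ hBT => ?_⟩
  · rw [transform_eq T hBT]
    exact (frameProjection_mul_unit θA hT).symm
  · refine ⟨_, isUnit_inverse_star_mul_self_mul_of_frameProjection_eq hDAinv hDBinv hP,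
      fun j => ?_⟩
    rw [hBf, hAf, mul_assoc, mul_inverse_star_mul_self_mul_of_frameProjection_eq hDBinv hP]
  · rw [transform_eq T hBT, ← mul_assoc, inverse_star_mul_self_mul_star_mul_self hDAinv, one_mul]

/-- Two operator-valued frames `{A_j}` and `{B_j}`, with frame transforms `θ_A, θ_B` built from
a common family of partial isometries `{L_j}` (so `A_j = L_j*θ_A`, `B_j = L_j*θ_B`), frame
operators `D_A = θ_A*θ_A`, `D_B = θ_B*θ_B` (invertible), and frame projections
`P_A = θ_A D_A^{-1}θ_A*`, `P_B = θ_B D_B^{-1}θ_B*`, are right-similar (`B_j = A_j T` for an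
invertible `T`) if and only if `P_A = P_B`; moreover any such `T` equals
`D_A^{-1}θ_A*θ_B` (so `T` is uniquely determined). -/
theorem right_similar_iff_same_frame_projection {J : Type*}
    (Af Bf L : J → 𝓜(ℂ, B)) (E : 𝓜(ℂ, B))
    (hE : IsIdempotentElem E ∧ IsSelfAdjoint E)
    (hL : ∀ i j, star (L i) * L j = if i = j then E else 0)
    (hEA : ∀ j, E * Af j = Af j) (hEB : ∀ j, E * Bf j = Bf j)
    (θA θB DA DB : 𝓜(ℂ, B))
    (hθA : HasStrictSum (fun j => L j * Af j) θA)
    (hθB : HasStrictSum (fun j => L j * Bf j) θB)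
    (hDA : star θA * θA = DA) (hDB : star θB * θB = DB)
    (hDAinv : IsUnit DA) (hDBinv : IsUnit DB)
    (hAf : ∀ j, Af j = star (L j) * θA) (hBf : ∀ j, Bf j = star (L j) * θB) :
    ((∃ T : 𝓜(ℂ, B), IsUnit T ∧ ∀ j, Bf j = Af j * T) ↔
      θA * Ring.inverse DA * star θA = θB * Ring.inverse DB * star θB)
    ∧ ∀ T : 𝓜(ℂ, B), IsUnit T → (∀ j, Bf j = Af j * T) →
        T = Ring.inverse DA * star θA * θB :=
  right_similar_iff_same_frame_projection_general Af Bf L θA θB DA DB hθA hθB hDA hDB hDAinv hDBinv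
    hAf hBf
end

section
/- Let {A_j} be an operator-valued frame with frame projection P_A, and let P be a projection in M(A⊗K). Then P is Murray–von Neumann equivalent to P_A if and only if there exists an operator-valued frame {B_j} (with the same range space) whose frame projection is P. In particular, if V is a partial isometry with VV* = P and V*V = P_A, then B_j := L_j*Vθ_A defines such a frame with D_B = D_A and θ_B = Vθ_A. -/
open scoped MultiplierAlgebra
open Filter Topology
open scoped Classical

variable {B : Type*} [NonUnitalCStarAlgebra B]

noncomputable local instance : PartialOrder 𝓜(ℂ, B) := CStarAlgebra.spectralOrder _
local instance : StarOrderedRing 𝓜(ℂ, B) := CStarAlgebra.spectralOrderedRing _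

/-! If `VV* = P` and `V*V = P_A`, then `θ_A* P_A θ_A = D_A` shows that `Vθ_A` has the same frame
operator as `θ_A`, and its frame projection is `V P_A V* = P`; the coefficients `L_j* V θ_A` are
recovered from `Vθ_A` by multiplying `Σ L_j L_j* = 1` on the right. Conversely, for frame
transforms `θ_A`, `θ_B` the element `V = θ_B D_B^{-1/2} D_A^{-1/2} θ_A*` satisfies
`VV* = P_B` and `V*V = P_A`, since `D_A^{-1/2} D_A D_A^{-1/2} = 1`. -/

section CStarRing

variable {R : Type*} [NonUnitalNormedRing R] [StarRing R] [CStarRing R]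

theorem CStarRing.eq_of_forall_mul_left_eq {x y : R} (h : ∀ d, d * x = d * y) : x = y := by
  have h0 : star (x - y) * (x - y) = 0 := by rw [mul_sub, h, sub_self]
  exact sub_eq_zero.mp ((CStarRing.star_mul_self_eq_zero_iff _).mp h0)

theorem CStarRing.eq_of_forall_mul_right_eq {x y : R} (h : ∀ d, x * d = y * d) : x = y := by
  have h0 : (x - y) * star (x - y) = 0 := by rw [sub_mul, h, sub_self]
  exact sub_eq_zero.mp ((CStarRing.mul_star_self_eq_zero_iff _).mp h0)

theorem star_mul_self_mul_star_of_isIdempotentElem {a : R} (h : IsIdempotentElem (star a * a)) :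
    star a * a * star a = star a := by
  have hp : star a * a * (star a * a) = star a * a := h
  have h0 : (star a * a * star a - star a) * star (star a * a * star a - star a) = 0 := calc
    _ = star a * a * (star a * a) * (star a * a) - star a * a * (star a * a)
          - star a * a * (star a * a) + star a * a := by
        simp only [star_sub, star_mul, star_star]; noncomm_ring
    _ = 0 := by rw [hp, hp, sub_self, zero_sub, neg_add_cancel]
  exact sub_eq_zero.mp ((CStarRing.mul_star_self_eq_zero_iff _).mp h0)

end CStarRing

namespace DoubleCentralizer

variable {𝕜 A : Type*} [NontriviallyNormedField 𝕜] [NonUnitalNormedRing A] [NormedSpace 𝕜 A]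
  [SMulCommClass 𝕜 A A] [IsScalarTower 𝕜 A A] [StarRing A] [CStarRing A]

theorem mul_coe_eq_coe_fst (a : 𝓜(𝕜, A)) (b : A) : a * (b : 𝓜(𝕜, A)) = (a.fst b : 𝓜(𝕜, A)) := by
  ext x
  · show a.fst (b * x) = a.fst b * x
    exact CStarRing.eq_of_forall_mul_left_eq fun d => by
      rw [← a.central, ← mul_assoc, a.central, mul_assoc]
  · exact a.central x b

theorem coe_mul_eq_coe_snd (a : 𝓜(𝕜, A)) (b : A) : (b : 𝓜(𝕜, A)) * a = (a.snd b : 𝓜(𝕜, A)) := by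
  ext x
  · exact (a.central b x).symm
  · show a.snd (x * b) = x * a.snd b
    exact CStarRing.eq_of_forall_mul_right_eq fun d => by
      rw [a.central, mul_assoc, ← a.central, mul_assoc]

end DoubleCentralizer

section StrictSum

variable {J : Type*}

theorem HasStrictSum.mul_mul {g : J → 𝓜(ℂ, B)} {T : 𝓜(ℂ, B)} (h : HasStrictSum g T)
    (x y : 𝓜(ℂ, B)) : HasStrictSum (fun j => x * g j * y) (x * T * y) := by
  refine fun b => ⟨?_, ?_⟩
  · have hb := ((h (y.fst b)).1.const_mul x).congr fun F => by
      rw [← DoubleCentralizer.mul_coe_eq_coe_fst]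
    simpa only [mul_zero, Finset.sum_mul, Finset.mul_sum, mul_sub, sub_mul, mul_assoc] using hb
  · have hb := ((h (x.snd b)).2.mul_const y).congr fun F => by
      rw [← DoubleCentralizer.coe_mul_eq_coe_snd]
    simpa only [zero_mul, Finset.sum_mul, Finset.mul_sum, mul_sub, sub_mul, mul_assoc] using hb

theorem HasStrictSum.star_mul_mul_self {L : J → 𝓜(ℂ, B)}
    (h : HasStrictSum (fun j => L j * star (L j)) 1) (y : 𝓜(ℂ, B)) :
    HasStrictSum (fun j => star (star (L j) * y) * (star (L j) * y)) (star y * y) := by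
  simpa only [star_mul, star_star, mul_one, mul_assoc] using h.mul_mul (star y) y

theorem HasStrictSum.mul_star_mul {L : J → 𝓜(ℂ, B)}
    (h : HasStrictSum (fun j => L j * star (L j)) 1) (y : 𝓜(ℂ, B)) :
    HasStrictSum (fun j => L j * (star (L j) * y)) y := by
  simpa only [one_mul, mul_assoc] using h.mul_mul 1 y

end StrictSum

section FrameProjection

variable {R : Type*} [Ring R] [StarRing R]

noncomputable def frameProj (θ : R) : R := θ * Ring.inverse (star θ * θ) * star θ

theorem star_mul_mul_self_of_star_mul_self_eq_frameProj {V θ : R} (hθ : IsUnit (star θ * θ))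
    (hV : star V * V = frameProj θ) : star (V * θ) * (V * θ) = star θ * θ := calc
  star (V * θ) * (V * θ) = star θ * (star V * V) * θ := by simp only [star_mul, mul_assoc]
  _ = star θ * θ * Ring.inverse (star θ * θ) * (star θ * θ) := by
      simp only [hV, frameProj, mul_assoc]
  _ = star θ * θ := by rw [Ring.mul_inverse_cancel _ hθ, one_mul]

theorem frameProj_mul_of_star_mul_self_eq_frameProj {V θ : R} (hθ : IsUnit (star θ * θ))
    (hV : star V * V = frameProj θ) : frameProj (V * θ) = V * star V * (V * star V) := by
  rw [frameProj, star_mul_mul_self_of_star_mul_self_eq_frameProj hθ hV, mul_assoc V (star V),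
    ← mul_assoc (star V), hV]
  simp only [frameProj, star_mul, mul_assoc]

theorem mul_star_eq_frameProj_of_inverse_sqrt {θ θ' s t : R} (hs : IsSelfAdjoint s)
    (hsθ : s * (star θ * θ) * s = 1) (ht : IsSelfAdjoint t)
    (htθ' : t * t = Ring.inverse (star θ' * θ')) :
    θ' * t * s * star θ * star (θ' * t * s * star θ) = frameProj θ' := calc
  _ = θ' * t * (s * (star θ * θ) * s) * t * star θ' := by
      simp only [star_mul, star_star, hs.star_eq, ht.star_eq, mul_assoc]
  _ = frameProj θ' := by rw [hsθ, mul_one, mul_assoc θ' t t, htθ', frameProj]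

end FrameProjection

section CStarAlgebra

variable {A : Type*} [CStarAlgebra A] [PartialOrder A] [StarOrderedRing A]

theorem exists_inverse_sqrt {D : A} (hD : IsUnit D) (hD0 : 0 ≤ D) :
    ∃ s : A, IsSelfAdjoint s ∧ s * D * s = 1 ∧ s * s = Ring.inverse D := by
  obtain ⟨r, hr, hunit, rfl⟩ : ∃ r : A, IsSelfAdjoint r ∧ IsUnit r ∧ r * r = D :=
    ⟨CFC.sqrt D, .of_nonneg (CFC.sqrt_nonneg D), (CFC.isUnit_sqrt_iff D hD0).mpr hD,
      CFC.sqrt_mul_sqrt_self D hD0⟩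
  refine ⟨Ring.inverse r, hr.ringInverse, ?_, (Ring.mul_inverse_rev' (Commute.refl r)).symm⟩
  rw [← mul_assoc, Ring.inverse_mul_cancel r hunit, one_mul, Ring.mul_inverse_cancel r hunit]

theorem exists_mul_star_eq_frameProj_and_star_mul_eq_frameProj {θ θ' : A}
    (hθ : IsUnit (star θ * θ)) (hθ' : IsUnit (star θ' * θ')) :
    ∃ V : A, V * star V = frameProj θ' ∧ star V * V = frameProj θ := by
  obtain ⟨s, hs, hsθ, hss⟩ := exists_inverse_sqrt hθ (star_mul_self_nonneg θ)
  obtain ⟨t, ht, htθ', htt⟩ := exists_inverse_sqrt hθ' (star_mul_self_nonneg θ')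
  have hstar : star (θ' * t * s * star θ) = θ * s * t * star θ' := by
    simp only [star_mul, star_star, hs.star_eq, ht.star_eq, mul_assoc]
  refine ⟨θ' * t * s * star θ, mul_star_eq_frameProj_of_inverse_sqrt hs hsθ ht htt, ?_⟩
  rw [hstar, ← star_star (θ' * t * s * star θ), hstar]
  exact mul_star_eq_frameProj_of_inverse_sqrt ht htθ' hs hss

end CStarAlgebra

theorem equivalent_iff_exists_frame_general {J : Type*}
    (L : J → 𝓜(ℂ, B)) (E : 𝓜(ℂ, B))
    (hE : IsIdempotentElem E ∧ IsSelfAdjoint E)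
    (hL : ∀ i j, star (L i) * L j = if i = j then E else 0)
    (hdecomp : HasStrictSum (fun j => L j * star (L j)) (1 : 𝓜(ℂ, B)))
    (θA DA : 𝓜(ℂ, B))
    (hDA : star θA * θA = DA) (hDAinv : IsUnit DA)
    (P : 𝓜(ℂ, B)) (hP : IsIdempotentElem P ∧ IsSelfAdjoint P) :
    ((∃ V : 𝓜(ℂ, B), V * star V = P ∧ star V * V = θA * Ring.inverse DA * star θA) ↔
      (∃ (Bf : J → 𝓜(ℂ, B)) (θB DB : 𝓜(ℂ, B)),
        (∀ j, E * Bf j = Bf j) ∧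
        HasStrictSum (fun j => star (Bf j) * Bf j) DB ∧ IsUnit DB ∧ (0 : 𝓜(ℂ, B)) ≤ DB ∧
        HasStrictSum (fun j => L j * Bf j) θB ∧ star θB * θB = DB ∧
        θB * Ring.inverse DB * star θB = P))
    ∧ ∀ V : 𝓜(ℂ, B), V * star V = P → star V * V = θA * Ring.inverse DA * star θA →
        HasStrictSum (fun j => star (star (L j) * (V * θA)) * (star (L j) * (V * θA))) DA
        ∧ HasStrictSum (fun j => L j * (star (L j) * (V * θA))) (V * θA) := by
  subst hDA
  have hEL : ∀ j, E * star (L j) = star (L j) := fun j => by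
    have hLj : star (L j) * L j = E := by simpa using hL j j
    exact hLj ▸ star_mul_self_mul_star_of_isIdempotentElem (hLj ▸ hE.1)
  have hframe : ∀ V, star V * V = frameProj θA →
      HasStrictSum (fun j => star (star (L j) * (V * θA)) * (star (L j) * (V * θA))) (star θA * θA)
      ∧ HasStrictSum (fun j => L j * (star (L j) * (V * θA))) (V * θA) := fun V hV =>
    ⟨star_mul_mul_self_of_star_mul_self_eq_frameProj hDAinv hV ▸ hdecomp.star_mul_mul_self _,
      hdecomp.mul_star_mul _⟩
  refine ⟨⟨?_, ?_⟩, fun V _ hV => hframe V hV⟩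
  · rintro ⟨V, hV1, hV2⟩
    refine ⟨fun j => star (L j) * (V * θA), V * θA, star θA * θA, fun j => by rw [← mul_assoc, hEL],
      (hframe V hV2).1, hDAinv, star_mul_self_nonneg θA, (hframe V hV2).2,
      star_mul_mul_self_of_star_mul_self_eq_frameProj hDAinv hV2, ?_⟩
    -- writing `D_A` as the frame operator of `Vθ_A` turns the goal into `frameProj (V * θA) = P`
    rw [← star_mul_mul_self_of_star_mul_self_eq_frameProj hDAinv hV2]
    exact (frameProj_mul_of_star_mul_self_eq_frameProj hDAinv hV2).trans (by rw [hV1, hP.1])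
  · rintro ⟨Bf, θB, DB, -, -, hDB, -, -, rfl, hPB⟩
    obtain ⟨V, hV1, hV2⟩ := exists_mul_star_eq_frameProj_and_star_mul_eq_frameProj hDAinv hDB
    exact ⟨V, hV1.trans hPB, hV2⟩

/-- Let `{A_j}` be an operator-valued frame with frame transform `θ_A` (built from partial
isometries `L_j` with `L_i*L_j = δ_{ij}E` and `Σ_j L_jL_j* = 1` strictly), invertible frame
operator `D_A = θ_A*θ_A` and frame projection `P_A = θ_A D_A^{-1}θ_A*`, and let `P` be a
projection in `M(A⊗K)`.  Then `P` is Murray-von Neumann equivalent to `P_A` if and only if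
there is an operator-valued frame `{B_j}` (with the same range space, i.e. `E B_j = B_j`)
whose frame projection is `P`.  In particular, if `VV* = P` and `V*V = P_A`, then
`B_j := L_j* (V θ_A)` defines such a frame, with `D_B = D_A` and `θ_B = V θ_A`. -/
theorem equivalent_iff_exists_frame {J : Type*}
    (Af L : J → 𝓜(ℂ, B)) (E : 𝓜(ℂ, B))
    (hE : IsIdempotentElem E ∧ IsSelfAdjoint E)
    (hL : ∀ i j, star (L i) * L j = if i = j then E else 0)
    (hdecomp : HasStrictSum (fun j => L j * star (L j)) (1 : 𝓜(ℂ, B)))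
    (hEA : ∀ j, E * Af j = Af j)
    (θA DA : 𝓜(ℂ, B))
    (hθA : HasStrictSum (fun j => L j * Af j) θA)
    (hDA : star θA * θA = DA) (hDAinv : IsUnit DA) (hDApos : (0 : 𝓜(ℂ, B)) ≤ DA)
    (hAf : ∀ j, Af j = star (L j) * θA)
    (P : 𝓜(ℂ, B)) (hP : IsIdempotentElem P ∧ IsSelfAdjoint P) :
    ((∃ V : 𝓜(ℂ, B), V * star V = P ∧ star V * V = θA * Ring.inverse DA * star θA) ↔
      (∃ (Bf : J → 𝓜(ℂ, B)) (θB DB : 𝓜(ℂ, B)),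
        (∀ j, E * Bf j = Bf j) ∧
        HasStrictSum (fun j => star (Bf j) * Bf j) DB ∧ IsUnit DB ∧ (0 : 𝓜(ℂ, B)) ≤ DB ∧
        HasStrictSum (fun j => L j * Bf j) θB ∧ star θB * θB = DB ∧
        θB * Ring.inverse DB * star θB = P))
    ∧ ∀ V : 𝓜(ℂ, B), V * star V = P → star V * V = θA * Ring.inverse DA * star θA →
        HasStrictSum (fun j => star (star (L j) * (V * θA)) * (star (L j) * (V * θA))) DA
        ∧ HasStrictSum (fun j => L j * (star (L j) * (V * θA))) (V * θA) :=
  equivalent_iff_exists_frame_general L E hE hL hdecomp θA DA hDA hDAinv P hP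
end
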